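/- Let 𝔫' be ℂ⁴ regarded as a real Lie algebra with bracket [a,b] = (0, (i/2)(a₁b̄₁ − ā₁b₁), 0, (i/2)(a₃b̄₃ − ā₃b₃)), and let λ(z₁,z₂,z₃,z₄) = (ξz₃, z₄, ξz₁, z₂). Then the real vector space of closed ℝ-linear functionals α : 𝔫' → ℝ has dimension 6, and its subspace consisting of those closed functionals that additionally satisfy α ∘ λ = α has dimension 1 and is spanned by the functional (z₁,z₂,z₃,z₄) ↦ Im(z₂ + z₄). (This computes b₁ = 6 for the associated nilmanifold M and b₁ = 1 for the quotient orbifold M/G and its strong KT resolution.) -/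

import Mathlib

/-- The Lie bracket on `𝔫' = ℂ⁴`:
`[a,b] = (0, (i/2)(a₁b̄₁ − ā₁b₁), 0, (i/2)(a₃b̄₃ − ā₃b₃))`. -/
noncomputable def nBr (a b : ℂ × ℂ × ℂ × ℂ) : ℂ × ℂ × ℂ × ℂ :=
  (0, Complex.I / 2 * (a.1 * (starRingEnd ℂ) b.1 - (starRingEnd ℂ) a.1 * b.1), 0,
   Complex.I / 2 * (a.2.2.1 * (starRingEnd ℂ) b.2.2.1 - (starRingEnd ℂ) a.2.2.1 * b.2.2.1))

/-- The primitive cube root of unity `ξ = e^{2πi/3}`. -/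
noncomputable def xi : ℂ := Complex.exp (2 * Real.pi * Complex.I / 3)

/-- The map `λ(z₁,z₂,z₃,z₄) = (ξz₃, z₄, ξz₁, z₂)`. -/
noncomputable def lam (z : ℂ × ℂ × ℂ × ℂ) : ℂ × ℂ × ℂ × ℂ :=
  (xi * z.2.2.1, z.2.2.2, xi * z.1, z.2.1)

/-- The real vector space of closed `ℝ`-linear functionals on `𝔫'`, i.e. those vanishing on
all brackets. -/
noncomputable def closedFunctionals : Submodule ℝ ((ℂ × ℂ × ℂ × ℂ) →ₗ[ℝ] ℝ) where
  carrier := {α | ∀ a b : ℂ × ℂ × ℂ × ℂ, α (nBr a b) = 0}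
  add_mem' := fun hα hβ a b => by
    simp only [LinearMap.add_apply, hα a b, hβ a b, add_zero]
  zero_mem' := fun a b => rfl
  smul_mem' := fun c α hα a b => by
    simp only [LinearMap.smul_apply, hα a b, smul_zero]

/-- The real vector space of closed `ℝ`-linear functionals on `𝔫'` that are furthermore
invariant under `λ`. -/
noncomputable def invClosedFunctionals : Submodule ℝ ((ℂ × ℂ × ℂ × ℂ) →ₗ[ℝ] ℝ) where
  carrier := {α | (∀ a b : ℂ × ℂ × ℂ × ℂ, α (nBr a b) = 0) ∧
    ∀ z : ℂ × ℂ × ℂ × ℂ, α (lam z) = α z}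
  add_mem' := fun hα hβ =>
    ⟨fun a b => by simp only [LinearMap.add_apply, hα.1 a b, hβ.1 a b, add_zero],
     fun z => by simp only [LinearMap.add_apply, hα.2 z, hβ.2 z]⟩
  zero_mem' := ⟨fun a b => rfl, fun z => rfl⟩
  smul_mem' := fun c α hα =>
    ⟨fun a b => by simp only [LinearMap.smul_apply, hα.1 a b, smul_zero],
     fun z => by simp only [LinearMap.smul_apply, hα.2 z]⟩

/-- The `ℝ`-linear functional `(z₁,z₂,z₃,z₄) ↦ Im (z₂ + z₄)` on `ℂ⁴`. -/
noncomputable def imZ2Z4 : (ℂ × ℂ × ℂ × ℂ) →ₗ[ℝ] ℝ where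
  toFun z := (z.2.1 + z.2.2.2).im
  map_add' a b := by simp; ring
  map_smul' c a := by simp; ring

/-!
The bracket takes values in the real span of `e₂ = (0,1,0,0)` and `e₄ = (0,0,0,1)` and attains
both, so the closed functionals form the annihilator of a plane in `ℂ⁴ ≅ ℝ⁸`. If a closed `α` is
also `λ`-invariant, then, since `λ²` multiplies `z₁` by `ξ²`, the restriction of `α` to the
`z₁`-axis is invariant under multiplication by a primitive cube root of unity and hence vanishes
(average over the three roots, which sum to `0`). Then `λ` kills the `z₃`-axis as well and
identifies the `z₂`- and `z₄`-axes, on which `α` only sees the imaginary part.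
-/

open Complex ComplexConjugate Module

theorem Complex.I_div_two_mul_sub_conj (w u : ℂ) :
    I / 2 * (w * conj u - conj w * u) = ((-(w * conj u).im : ℝ) : ℂ) := by
  apply Complex.ext <;> simp; ring

theorem LinearMap.map_complex_eq {M : Type*} [AddCommGroup M] [Module ℝ M] (β : ℂ →ₗ[ℝ] M)
    (w : ℂ) : β w = w.re • β 1 + w.im • β I := by
  conv_lhs => rw [← Complex.re_add_im w]
  rw [← map_smul, ← map_smul, ← map_add]
  simp [Complex.real_smul]

theorem IsPrimitiveRoot.addMonoidHom_eq_zero_of_map_mul_eq {R : Type*} [CommRing R] [IsDomain R]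
    {ζ : R} {n : ℕ} (hζ : IsPrimitiveRoot ζ n) (hn : 1 < n) (f : R →+ ℝ)
    (hf : ∀ w, f (ζ * w) = f w) : f = 0 := by
  ext w
  have hpow : ∀ i : ℕ, f (ζ ^ i * w) = f w := by
    intro i
    induction i with
    | zero => simp
    | succ i ih => rw [pow_succ', mul_assoc, hf, ih]
  have hsum : ∑ i ∈ Finset.range n, f (ζ ^ i * w) = 0 := by
    rw [← map_sum, ← Finset.sum_mul, hζ.geom_sum_eq_zero hn, zero_mul, map_zero]
  simp only [hpow, Finset.sum_const, Finset.card_range, nsmul_eq_mul] at hsum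
  simpa [show (n : ℝ) ≠ 0 by positivity] using hsum

theorem isPrimitiveRoot_xi : IsPrimitiveRoot xi 3 := by
  simpa [xi] using Complex.isPrimitiveRoot_exp 3 (by norm_num)

/-- The derived algebra `[𝔫', 𝔫']`. -/
noncomputable def nDerived : Submodule ℝ (ℂ × ℂ × ℂ × ℂ) :=
  Submodule.span ℝ (Set.range (Function.uncurry nBr))

theorem nBr_eq (a b : ℂ × ℂ × ℂ × ℂ) :
    nBr a b = (-(a.1 * conj b.1).im) • ((0 : ℂ), (1 : ℂ), (0 : ℂ), (0 : ℂ)) +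
      (-(a.2.2.1 * conj b.2.2.1).im) • ((0 : ℂ), (0 : ℂ), (0 : ℂ), (1 : ℂ)) := by
  simp [nBr, Complex.I_div_two_mul_sub_conj, Complex.real_smul]

theorem nDerived_eq_span :
    nDerived = Submodule.span ℝ {((0 : ℂ), (1 : ℂ), (0 : ℂ), (0 : ℂ)), (0, 0, 0, 1)} := by
  apply le_antisymm
  · rw [nDerived, Submodule.span_le]
    rintro _ ⟨⟨a, b⟩, rfl⟩
    rw [Function.uncurry_apply_pair, nBr_eq]
    exact add_mem (Submodule.smul_mem _ _ (Submodule.subset_span (by simp)))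
      (Submodule.smul_mem _ _ (Submodule.subset_span (by simp)))
  · rw [Submodule.span_le, Set.pair_subset_iff]
    have h₂ : nBr (1, 0, 0, 0) (I, 0, 0, 0) = (0, 1, 0, 0) := by simp [nBr_eq]
    have h₄ : nBr (0, 0, 1, 0) (0, 0, I, 0) = (0, 0, 0, 1) := by simp [nBr_eq]
    exact ⟨Submodule.subset_span ⟨(_, _), h₂⟩, Submodule.subset_span ⟨(_, _), h₄⟩⟩

theorem finrank_nDerived : finrank ℝ nDerived = 2 := by
  have hli : LinearIndependent ℝ ![((0 : ℂ), (1 : ℂ), (0 : ℂ), (0 : ℂ)), (0, 0, 0, 1)] := by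
    rw [LinearIndependent.pair_iff]
    intro s t h
    simpa [Prod.ext_iff, Complex.ext_iff] using h
  have h := finrank_span_eq_card hli
  rwa [Matrix.range_cons_cons_empty, Fintype.card_fin, ← nDerived_eq_span] at h

theorem closedFunctionals_eq_dualAnnihilator : closedFunctionals = nDerived.dualAnnihilator := by
  ext α
  change (∀ a b, α (nBr a b) = 0) ↔
    α ∈ (nDerived.dualAnnihilator : Set (Dual ℝ (ℂ × ℂ × ℂ × ℂ)))
  rw [nDerived, Submodule.coe_dualAnnihilator_span]
  simp [Set.range_subset_iff]

theorem mem_closedFunctionals_iff (α : (ℂ × ℂ × ℂ × ℂ) →ₗ[ℝ] ℝ) :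
    α ∈ closedFunctionals ↔ α (0, 1, 0, 0) = 0 ∧ α (0, 0, 0, 1) = 0 := by
  rw [closedFunctionals_eq_dualAnnihilator, nDerived_eq_span, ← SetLike.mem_coe,
    Submodule.coe_dualAnnihilator_span]
  simp [Set.pair_subset_iff]

theorem finrank_closedFunctionals : finrank ℝ closedFunctionals = 6 := by
  have h := Subspace.finrank_add_finrank_dualAnnihilator_eq nDerived
  simp only [finrank_nDerived, Module.finrank_prod, Complex.finrank_real_complex] at h
  rw [closedFunctionals_eq_dualAnnihilator]
  -- restate the goal over `Module.Dual ℝ _` rather than `_ →ₗ[ℝ] ℝ`, so that it matches `h`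
  change finrank ℝ nDerived.dualAnnihilator = 6
  omega

section LamInvariant

variable {α : (ℂ × ℂ × ℂ × ℂ) →ₗ[ℝ] ℝ}

theorem apply_fst_eq_zero_of_lam_invariant (hα : ∀ z, α (lam z) = α z) (w : ℂ) :
    α (w, 0, 0, 0) = 0 := by
  let f : ℂ →+ ℝ := (α.comp (LinearMap.inl ℝ ℂ (ℂ × ℂ × ℂ))).toAddMonoidHom
  have hf : ∀ w, f (xi ^ 2 * w) = f w := fun w => by
    have h₁ := hα (0, 0, xi * w, 0)
    have h₂ := hα (w, 0, 0, 0)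
    simp only [lam, mul_zero] at h₁ h₂
    show α (xi ^ 2 * w, 0, 0, 0) = α (w, 0, 0, 0)
    rw [pow_two, mul_assoc, h₁, h₂]
  have hξ : IsPrimitiveRoot (xi ^ 2) 3 := isPrimitiveRoot_xi.pow_of_coprime 2 (by norm_num)
  exact DFunLike.congr_fun (hξ.addMonoidHom_eq_zero_of_map_mul_eq (by norm_num) f hf) w

theorem apply_thd_eq_zero_of_lam_invariant (hα : ∀ z, α (lam z) = α z) (w : ℂ) :
    α (0, 0, w, 0) = 0 := by
  rw [← hα, lam]
  simpa using apply_fst_eq_zero_of_lam_invariant hα (xi * w)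

theorem apply_snd_eq_of_apply_snd_one (h : α (0, 1, 0, 0) = 0) (w : ℂ) :
    α (0, w, 0, 0) = w.im * α (0, I, 0, 0) := by
  have := (α.comp ((LinearMap.inr ℝ ℂ (ℂ × ℂ × ℂ)).comp
    (LinearMap.inl ℝ ℂ (ℂ × ℂ)))).map_complex_eq w
  change α (0, w, 0, 0) = w.re • α (0, 1, 0, 0) + w.im • α (0, I, 0, 0) at this
  simp [this, h]

end LamInvariant

theorem LinearMap.apply_eq_add_apply_components (α : (ℂ × ℂ × ℂ × ℂ) →ₗ[ℝ] ℝ)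
    (z : ℂ × ℂ × ℂ × ℂ) :
    α z = α (z.1, 0, 0, 0) + α (0, z.2.1, 0, 0) + α (0, 0, z.2.2.1, 0) + α (0, 0, 0, z.2.2.2) := by
  simp only [← map_add]
  congr 1
  simp

theorem imZ2Z4_mem_invClosedFunctionals : imZ2Z4 ∈ invClosedFunctionals := by
  refine ⟨(mem_closedFunctionals_iff imZ2Z4).2 (by simp [imZ2Z4]), fun z => ?_⟩
  simp only [imZ2Z4, lam, LinearMap.coe_mk, AddHom.coe_mk]
  ring_nf

theorem invClosedFunctionals_eq_span :
    invClosedFunctionals = Submodule.span ℝ {imZ2Z4} := by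
  refine le_antisymm ?_ ?_
  · rintro α ⟨hclosed, hα⟩
    obtain ⟨h₂, -⟩ := (mem_closedFunctionals_iff α).1 hclosed
    have h₄₂ : ∀ w, α (0, 0, 0, w) = α (0, w, 0, 0) := fun w => by
      rw [← hα]
      simp [lam]
    refine Submodule.mem_span_singleton.2 ⟨α (0, I, 0, 0), LinearMap.ext fun z => ?_⟩
    symm
    rw [α.apply_eq_add_apply_components, apply_fst_eq_zero_of_lam_invariant hα,
      apply_thd_eq_zero_of_lam_invariant hα, h₄₂, apply_snd_eq_of_apply_snd_one h₂ z.2.1,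
      apply_snd_eq_of_apply_snd_one h₂ z.2.2.2]
    simp [imZ2Z4]
    ring
  · exact (Submodule.span_singleton_le_iff_mem _ _).2 imZ2Z4_mem_invClosedFunctionals

theorem imZ2Z4_ne_zero : imZ2Z4 ≠ 0 :=
  DFunLike.ne_iff.2 ⟨(0, I, 0, 0), by simp [imZ2Z4]⟩

/-- The space of closed `ℝ`-linear functionals on the Lie algebra `𝔫'` has dimension `6`, and
its subspace of `λ`-invariant closed functionals has dimension `1`, spanned by
`(z₁,z₂,z₃,z₄) ↦ Im (z₂ + z₄)`.  (This computes `b₁ = 6` for the associated nilmanifold and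
`b₁ = 1` for the quotient orbifold and its strong KT resolution.) -/
theorem closed_functionals_dim_six_invariant_dim_one :
    Module.finrank ℝ closedFunctionals = 6 ∧
    Module.finrank ℝ invClosedFunctionals = 1 ∧
    invClosedFunctionals = Submodule.span ℝ {imZ2Z4} := by
  refine ⟨finrank_closedFunctionals, ?_, invClosedFunctionals_eq_span⟩
  rw [invClosedFunctionals_eq_span]
  exact finrank_span_singleton imZ2Z4_ne_zero
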